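/- arXiv:1609.05626 — 8 statements merged into one kernel-verified Lean document; each statement's English description precedes it below -/
import Mathlib

section
/- Let r ≥ 2 be a natural number and n = F_0 a natural number. If X_w is a binomial-type count with E(X_w) = (f/2^w)(1 - 1/(r·2^w))^{n-1}, then E(X_w) ≤ (f/2^w)·(r/(r-1))·exp(-n/(r·2^w)) and E(X_w) ≥ (f/2^w)·exp(-θ n/(r·2^w)) where θ = r/(r-1), provided 1/(r·2^w) ≤ 2(θ-1)/θ². -/
/-!
Write `x = 1/(r·2^w)`. Since `x ≤ 1/r = (θ - 1)/θ`, we have `θ(1 - x) ≥ 1`. Then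
`1 + θx ≤ exp(θx)` and `(1 - x)(1 + θx) = 1 + x(θ(1 - x) - 1) ≥ 1` give `exp(-θx) ≤ 1 - x`,
while `1 - x ≤ exp(-x)` and `(1 - x)⁻¹ ≤ θ` give `(1 - x)^(n-1) ≤ (1 - x)^n / (1 - x) ≤ θ exp(-nx)`.
-/

open Real

theorem exp_neg_mul_le_one_sub {x θ : ℝ} (hx : 0 ≤ x) (hθ : 0 ≤ θ) (hθx : 1 ≤ θ * (1 - x)) :
    exp (-(θ * x)) ≤ 1 - x := by
  have hpos : 0 < 1 + θ * x := by positivity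
  calc exp (-(θ * x)) = (exp (θ * x))⁻¹ := exp_neg _
    _ ≤ (1 + θ * x)⁻¹ := inv_anti₀ hpos (by linarith [add_one_le_exp (θ * x)])
    _ ≤ 1 - x := by rw [inv_le_iff_one_le_mul₀' hpos]; nlinarith

theorem exp_neg_mul_le_one_sub_pow_pred {x θ : ℝ} (hx : 0 ≤ x) (hx1 : x < 1) (hθ : 0 ≤ θ)
    (hθx : 1 ≤ θ * (1 - x)) (n : ℕ) :
    exp (-(θ * x * n)) ≤ (1 - x) ^ (n - 1) :=
  calc exp (-(θ * x * n)) = exp (-(θ * x)) ^ n := by rw [← exp_nat_mul]; ring_nf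
    _ ≤ (1 - x) ^ n := pow_le_pow_left₀ (exp_nonneg _) (exp_neg_mul_le_one_sub hx hθ hθx) n
    _ ≤ (1 - x) ^ (n - 1) := pow_le_pow_of_le_one (by linarith) (by linarith) (Nat.sub_le n 1)

theorem one_sub_pow_pred_le_mul_exp_neg {x θ : ℝ} (hx : 0 ≤ x) (hx1 : x < 1)
    (hθx : 1 ≤ θ * (1 - x)) (n : ℕ) :
    (1 - x) ^ (n - 1) ≤ θ * exp (-(x * n)) := by
  have hpos : 0 < 1 - x := by linarith
  have hpred : (1 - x) ^ (n - 1) * (1 - x) ≤ (1 - x) ^ n := by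
    rcases n with _ | n
    · simpa using hx
    · simp [pow_succ]
  calc (1 - x) ^ (n - 1) ≤ (1 - x) ^ n / (1 - x) := (le_div_iff₀ hpos).2 hpred
    _ ≤ θ * (1 - x) ^ n := by
      rw [div_le_iff₀ hpos]
      nlinarith [pow_nonneg hpos.le n]
    _ ≤ θ * exp (-x) ^ n := by
      have hθ : 0 ≤ θ := by nlinarith
      gcongr
      exact one_sub_le_exp_neg x
    _ = θ * exp (-(x * n)) := by rw [← exp_nat_mul]; ring_nf

theorem stmt_3_general (r n w : ℕ) (hr : 2 ≤ r) (f : ℝ) (hf : 0 < f)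
    (θ : ℝ) (hθ : θ = (r : ℝ) / ((r : ℝ) - 1)) :
    f / 2 ^ w * Real.exp (-(θ * n / ((r : ℝ) * 2 ^ w))) ≤
        f / 2 ^ w * (1 - 1 / ((r : ℝ) * 2 ^ w)) ^ (n - 1) ∧
      f / 2 ^ w * (1 - 1 / ((r : ℝ) * 2 ^ w)) ^ (n - 1) ≤
        f / 2 ^ w * θ * Real.exp (-((n : ℝ) / ((r : ℝ) * 2 ^ w))) := by
  have hr2 : (2 : ℝ) ≤ r := by exact_mod_cast hr
  set x : ℝ := 1 / ((r : ℝ) * 2 ^ w) with hx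
  have hx0 : 0 ≤ x := by positivity
  have hxr : x ≤ 1 / r := by
    refine one_div_le_one_div_of_le (by linarith) ?_
    exact le_mul_of_one_le_right (by positivity) (one_le_pow₀ one_le_two)
  have hx1 : x < 1 := hxr.trans_lt <| (div_lt_one (by linarith)).2 (by linarith)
  have hθ0 : 0 ≤ θ := by rw [hθ]; exact div_nonneg (by linarith) (by linarith)
  have hθx : 1 ≤ θ * (1 - x) :=
    calc 1 = θ * (1 - 1 / r) := by
          rw [hθ]; field_simp [show (r : ℝ) - 1 ≠ 0 by linarith]
      _ ≤ θ * (1 - x) := mul_le_mul_of_nonneg_left (by linarith) hθ0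
  have hc : 0 ≤ f / 2 ^ w := by positivity
  rw [show θ * n / ((r : ℝ) * 2 ^ w) = θ * x * n by rw [hx]; ring,
    show (n : ℝ) / ((r : ℝ) * 2 ^ w) = x * n by rw [hx]; ring, mul_assoc _ θ]
  exact ⟨mul_le_mul_of_nonneg_left (exp_neg_mul_le_one_sub_pow_pred hx0 hx1 hθ0 hθx n) hc,
    mul_le_mul_of_nonneg_left (one_sub_pow_pred_le_mul_exp_neg hx0 hx1 hθx n) hc⟩

/-- Bounds `L(w) ≤ E(X_w) ≤ H(w)` where `E(X_w) = (f/2^w)(1 - 1/(r·2^w))^{n-1}`,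
`L(w) = (f/2^w)·exp(-θn/(r·2^w))`, `H(w) = (f/2^w)·θ·exp(-n/(r·2^w))`,
`θ = r/(r-1)`, provided `r ≥ 2`, `n ≥ 1` and `1/(r·2^w) ≤ 2(θ-1)/θ²`. -/
theorem stmt_3 (r n w : ℕ) (hr : 2 ≤ r) (hn : 1 ≤ n) (f : ℝ) (hf : 0 < f)
    (θ : ℝ) (hθ : θ = (r : ℝ) / ((r : ℝ) - 1))
    (h : 1 / ((r : ℝ) * 2 ^ w) ≤ 2 * (θ - 1) / θ ^ 2) :
    f / 2 ^ w * Real.exp (-(θ * n / ((r : ℝ) * 2 ^ w))) ≤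
        f / 2 ^ w * (1 - 1 / ((r : ℝ) * 2 ^ w)) ^ (n - 1) ∧
      f / 2 ^ w * (1 - 1 / ((r : ℝ) * 2 ^ w)) ^ (n - 1) ≤
        f / 2 ^ w * θ * Real.exp (-((n : ℝ) / ((r : ℝ) * 2 ^ w))) :=
  stmt_3_general r n w hr f hf θ hθ
end

section
/- Define H(w) = (f/2^w)·θ·exp(-n/(r·2^w)) for natural w ≥ 1, with real f, θ, r, n > 0. Let l be the smallest level with n/2^l ≤ 4r (so 2r < n/2^l ≤ 4r). Then for every w ≤ l-2, H(w+1)/H(w) ≥ e⁴/2 ≥ 27, and consequently Σ_{w=1}^{l-1} H(w) ≤ (27/26)·H(l-1). -/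
/-! Going one level up halves the prefactor `f/2^w` but multiplies the exponential by
`exp (n/(r·2^(w+1)))`, and below level `l - 1` that exponent is at least `4` because
`n/2^l > 2r`. So `H` grows at least by the factor `e⁴/2 ≥ 27` per level, and the partial
sums of a sequence growing geometrically with ratio `q > 1` are at most `q/(q-1)` times their
last term. -/

open Finset Real

lemma le_exp_four_div_two : (27 : ℝ) ≤ exp 4 / 2 := by
  have h : (2.7182818283 : ℝ) ^ 4 ≤ exp 1 ^ 4 := pow_le_pow_left₀ (by norm_num) exp_one_gt_d9.le 4
  rw [← exp_nat_mul] at h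
  norm_num at h
  linarith

lemma succ_eq_exp_div_two_mul {f θ r n : ℝ} {H : ℕ → ℝ}
    (hH : ∀ w, H w = f / 2 ^ w * θ * exp (-(n / (r * 2 ^ w)))) (w : ℕ) :
    H (w + 1) = exp (n / (r * 2 ^ (w + 1))) / 2 * H w := by
  have hexp : -(n / (r * 2 ^ (w + 1))) = n / (r * 2 ^ (w + 1)) + -(n / (r * 2 ^ w)) := by
    rw [pow_succ, ← mul_assoc, ← div_div]
    ring
  rw [hH, hH, hexp, exp_add, pow_succ]
  ring

lemma four_lt_div_of_two_mul_lt {r n : ℝ} {l w : ℕ} (hr : 0 < r) (h : 2 * r < n / 2 ^ l)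
    (hw : w + 2 ≤ l) : 4 < n / (r * 2 ^ (w + 1)) := by
  have hn : 2 * r * 2 ^ l < n := (lt_div_iff₀ (by positivity)).mp h
  have hpow : (2 : ℝ) ^ (w + 1) * 2 ≤ 2 ^ l := by
    rw [← pow_succ]
    exact pow_le_pow_right₀ (by norm_num) (by omega)
  rw [lt_div_iff₀ (by positivity)]
  nlinarith

lemma sum_Icc_le_div_sub_one_mul {q : ℝ} {H : ℕ → ℝ} (hq : 1 < q) (h1 : 0 ≤ H 1) {m : ℕ}
    (hm : 1 ≤ m) (hgrowth : ∀ w, 1 ≤ w → w < m → q * H w ≤ H (w + 1)) :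
    ∑ w ∈ Icc 1 m, H w ≤ q / (q - 1) * H m := by
  have hq' : 0 < q - 1 := by linarith
  induction m, hm using Nat.le_induction with
  | base =>
    rw [Icc_self, sum_singleton]
    exact le_mul_of_one_le_left h1 ((one_le_div hq').mpr (by linarith))
  | succ m hm ih =>
    have hgrowth_m := hgrowth m hm (by omega)
    calc ∑ w ∈ Icc 1 (m + 1), H w
        ≤ q / (q - 1) * H m + H (m + 1) := by
          rw [sum_Icc_succ_top (by omega)]
          gcongr
          exact ih fun w hw hwm => hgrowth w hw (by omega)
      _ ≤ H (m + 1) / (q - 1) + H (m + 1) := by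
          rw [div_mul_eq_mul_div]
          gcongr
      _ = q / (q - 1) * H (m + 1) := by
          field_simp
          ring

theorem stmt_4_general (f θ r n : ℝ) (hf : 0 < f) (hθ : 0 < θ) (hr : 0 < r)
    (H : ℕ → ℝ) (hH : ∀ w, H w = f / 2 ^ w * θ * Real.exp (-(n / (r * 2 ^ w))))
    (l : ℕ) (h1 : 2 * r < n / 2 ^ l) :
    (∀ w : ℕ, 1 ≤ w → w + 2 ≤ l →
        (27 : ℝ) ≤ Real.exp 4 / 2 ∧ Real.exp 4 / 2 ≤ H (w + 1) / H w) ∧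
      ∑ w ∈ Finset.Icc 1 (l - 1), H w ≤ 27 / 26 * H (l - 1) := by
  have hpos : ∀ w, 0 < H w := fun w => by rw [hH]; positivity
  have hratio : ∀ w, w + 2 ≤ l → exp 4 / 2 ≤ H (w + 1) / H w := by
    intro w hw
    rw [succ_eq_exp_div_two_mul hH, mul_div_cancel_right₀ _ (hpos w).ne']
    gcongr
    exact (four_lt_div_of_two_mul_lt hr h1 hw).le
  refine ⟨fun w _ hw => ⟨le_exp_four_div_two, hratio w hw⟩, ?_⟩
  rcases Nat.lt_or_ge l 2 with hl | hl
  · rw [Icc_eq_empty (by omega), sum_empty]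
    exact mul_nonneg (by norm_num) (hpos _).le
  have hgeom := sum_Icc_le_div_sub_one_mul (q := 27) (by norm_num) (hpos 1).le
    (m := l - 1) (by omega) fun w _ hw => by
      rw [← le_div_iff₀ (hpos w)]
      exact le_exp_four_div_two.trans (hratio w (by omega))
  norm_num at hgeom
  exact hgeom

/-- Geometric decay of `H(w) = (f/2^w)·θ·exp(-n/(r·2^w))` below level `l`,
where `2r < n/2^l ≤ 4r`: for `1 ≤ w ≤ l-2`, `H(w+1)/H(w) ≥ e⁴/2 ≥ 27`, and
`∑_{w=1}^{l-1} H(w) ≤ (27/26)·H(l-1)`. -/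
theorem stmt_4 (f θ r n : ℝ) (hf : 0 < f) (hθ : 0 < θ) (hr : 0 < r) (hn : 0 < n)
    (H : ℕ → ℝ) (hH : ∀ w, H w = f / 2 ^ w * θ * Real.exp (-(n / (r * 2 ^ w))))
    (l : ℕ) (hl : 2 ≤ l) (h1 : 2 * r < n / 2 ^ l) (h2 : n / 2 ^ l ≤ 4 * r) :
    (∀ w : ℕ, 1 ≤ w → w + 2 ≤ l →
        (27 : ℝ) ≤ Real.exp 4 / 2 ∧ Real.exp 4 / 2 ≤ H (w + 1) / H w) ∧
      ∑ w ∈ Finset.Icc 1 (l - 1), H w ≤ 27 / 26 * H (l - 1) :=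
  stmt_4_general f θ r n hf hθ hr H hH l h1
end

section
/- Define H(w) = (f/2^w)·θ·exp(-n/(r·2^w)) for natural w, with real f, θ, r, n > 0. Let u be the largest level with n/2^u ≥ r/8 (so r/8 ≤ n/2^u < r/4). Then for every w ≥ u+1, H(w)/H(w+1) ≥ 2·e^{-1/16} ≥ 7/4, and consequently Σ_{w ≥ u+1} H(w) ≤ (7/3)·H(u+1). -/
/-!
Passing from level `w+1` down to `w` doubles `f/2^w` and squares `exp(-n/(r·2^(w+1)))`, so
`H w = 2·exp(-c) · H (w+1)` with `c = n/(r·2^(w+1))`. Above level `u` the constraint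
`n/2^u < r/4` gives `c < 1/16`, hence each step shrinks `H` by at least `2e^{-1/16} ≥ 7/4`
(from `1 - x ≤ e^{-x}`), and the tail is dominated by a geometric series of ratio `4/7`.
-/

open Real

theorem tsum_le_div_one_sub_of_succ_le_mul {a : ℕ → ℝ} {q : ℝ} (hq₀ : 0 ≤ q) (hq₁ : q < 1)
    (ha : ∀ k, 0 ≤ a k) (hstep : ∀ k, a (k + 1) ≤ q * a k) :
    ∑' k, a k ≤ a 0 / (1 - q) := by
  have hgeom : ∀ k, a k ≤ q ^ k * a 0 := fun k => le_geom hq₀ k fun j _ => hstep j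
  have hsummable : Summable fun k => q ^ k * a 0 :=
    (summable_geometric_of_lt_one hq₀ hq₁).mul_right _
  calc ∑' k, a k ≤ ∑' k, q ^ k * a 0 :=
        (hsummable.of_nonneg_of_le ha hgeom).tsum_le_tsum hgeom hsummable
    _ = a 0 / (1 - q) := by
        rw [tsum_mul_right, tsum_geometric_of_lt_one hq₀ hq₁, inv_mul_eq_div]

theorem seven_fourths_le_two_mul_exp_neg : (7 / 4 : ℝ) ≤ 2 * exp (-(1 / 16)) := by
  linarith [add_one_le_exp (-(1 / 16) : ℝ)]

theorem div_pow_mul_exp_eq_two_mul_exp_mul_succ (f θ r n : ℝ) (w : ℕ) :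
    f / 2 ^ w * θ * exp (-(n / (r * 2 ^ w))) =
      2 * exp (-(n / (r * 2 ^ (w + 1)))) *
        (f / 2 ^ (w + 1) * θ * exp (-(n / (r * 2 ^ (w + 1))))) := by
  have hhalf : n / (r * 2 ^ w) = n / (r * 2 ^ (w + 1)) + n / (r * 2 ^ (w + 1)) := by
    rw [pow_succ, ← mul_assoc, ← div_div (b := r * 2 ^ w), add_halves]
  rw [hhalf, neg_add, exp_add, pow_succ]
  field_simp

theorem div_mul_two_pow_lt_of_div_two_pow_lt {r n : ℝ} (hr : 0 < r) {u w : ℕ} (hw : u + 1 ≤ w)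
    (hn : n / 2 ^ u < r / 4) : n / (r * 2 ^ (w + 1)) < 1 / 16 := by
  have hpow : (2 : ℝ) ^ u * 4 ≤ 2 ^ (w + 1) := by
    rw [show (4 : ℝ) = 2 ^ 2 by norm_num, ← pow_add]
    exact pow_le_pow_right₀ (by norm_num) (by omega)
  rw [div_lt_iff₀ (by positivity)]
  calc n < r / 4 * 2 ^ u := (div_lt_iff₀ (by positivity)).mp hn
    _ ≤ 1 / 16 * (r * 2 ^ (w + 1)) := by nlinarith

theorem stmt_5_general (f θ r n : ℝ) (hf : 0 < f) (hθ : 0 < θ) (hr : 0 < r)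
    (H : ℕ → ℝ) (hH : ∀ w, H w = f / 2 ^ w * θ * Real.exp (-(n / (r * 2 ^ w))))
    (u : ℕ) (h2 : n / 2 ^ u < r / 4) :
    (∀ w : ℕ, u + 1 ≤ w →
        (7 / 4 : ℝ) ≤ 2 * Real.exp (-(1 / 16)) ∧
          2 * Real.exp (-(1 / 16)) ≤ H w / H (w + 1)) ∧
      ∑' k : ℕ, H (u + 1 + k) ≤ 7 / 3 * H (u + 1) := by
  have hpos : ∀ w, 0 < H w := fun w => by rw [hH]; positivity
  have hratio : ∀ w, u + 1 ≤ w → 2 * exp (-(1 / 16)) ≤ H w / H (w + 1) := by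
    intro w hw
    rw [le_div_iff₀ (hpos _), hH w, div_pow_mul_exp_eq_two_mul_exp_mul_succ, ← hH]
    have hc := div_mul_two_pow_lt_of_div_two_pow_lt hr hw h2
    exact mul_le_mul_of_nonneg_right (by gcongr) (hpos _).le
  refine ⟨fun w hw => ⟨seven_fourths_le_two_mul_exp_neg, hratio w hw⟩, ?_⟩
  have hstep : ∀ k, H (u + 1 + k + 1) ≤ 4 / 7 * H (u + 1 + k) := fun k => by
    have h74 := seven_fourths_le_two_mul_exp_neg.trans (hratio (u + 1 + k) (by omega))
    rw [le_div_iff₀ (hpos _)] at h74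
    linarith
  convert tsum_le_div_one_sub_of_succ_le_mul (by norm_num) (by norm_num)
    (fun k => (hpos (u + 1 + k)).le) hstep using 1
  norm_num [div_eq_mul_inv, mul_comm]

/-- Geometric decay of `H(w) = (f/2^w)·θ·exp(-n/(r·2^w))` above level `u`,
where `r/8 ≤ n/2^u < r/4`: for `w ≥ u+1`, `H(w)/H(w+1) ≥ 2e^{-1/16} ≥ 7/4`,
and `∑_{w ≥ u+1} H(w) ≤ (7/3)·H(u+1)`. -/
theorem stmt_5 (f θ r n : ℝ) (hf : 0 < f) (hθ : 0 < θ) (hr : 0 < r) (hn : 0 < n)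
    (H : ℕ → ℝ) (hH : ∀ w, H w = f / 2 ^ w * θ * Real.exp (-(n / (r * 2 ^ w))))
    (u : ℕ) (h1 : r / 8 ≤ n / 2 ^ u) (h2 : n / 2 ^ u < r / 4) :
    (∀ w : ℕ, u + 1 ≤ w →
        (7 / 4 : ℝ) ≤ 2 * Real.exp (-(1 / 16)) ∧
          2 * Real.exp (-(1 / 16)) ≤ H w / H (w + 1)) ∧
      ∑' k : ℕ, H (u + 1 + k) ≤ 7 / 3 * H (u + 1) :=
  stmt_5_general f θ r n hf hθ hr H hH u h2
end

section
/- Let θ = r/(r-1) with r ≥ 2, and let l ≤ w ≤ u with 2r < F_0/2^l ≤ 4r and w - l ≤ 5. If f ≥ F_0/λ, then 1/L(w) ≤ (λ/(2r))·exp(4θ), where L(w) = (f/2^w)·exp(-θ F_0/(r·2^w)). -/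
/-!
Write `w = l + k` with `k ≤ 5`. The hypotheses on `F₀` give `2^w / f ≤ (λ/(2r))·2^k` and
`θF₀/(r·2^w) ≤ 4θ/2^k`, so `1/L(w) ≤ (λ/(2r))·2^k·exp(4θ/2^k)`. Since `θ ≥ 1`, the factor
`2^k·exp(4θ/2^k)` is at most `exp(4θ)` as soon as `k·log 2 ≤ 4 - 4/2^k`, which holds for `k ≤ 5`
because `log 2 < 0.7`.
-/

open Real

lemma two_pow_le_exp_four_sub {k : ℕ} (hk : k ≤ 5) : (2 : ℝ) ^ k ≤ exp (4 - 4 / 2 ^ k) := by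
  rw [← log_le_iff_le_exp (by positivity), log_pow]
  interval_cases k <;> norm_num <;> linarith [log_two_lt_d9]

lemma two_pow_mul_exp_le_exp {k : ℕ} (hk : k ≤ 5) {θ : ℝ} (hθ : 1 ≤ θ) :
    2 ^ k * exp (4 * θ / 2 ^ k) ≤ exp (4 * θ) := by
  have hinv : 1 / (2 : ℝ) ^ k ≤ 1 := by
    rw [div_le_one (by positivity)]; exact one_le_pow₀ one_le_two
  have hexponent : 4 - 4 / (2 : ℝ) ^ k ≤ 4 * θ - 4 * θ / 2 ^ k := by
    have : 4 * θ - 4 * θ / 2 ^ k - (4 - 4 / 2 ^ k) = 4 * ((θ - 1) * (1 - 1 / (2 : ℝ) ^ k)) := by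
      ring
    linarith [mul_nonneg (sub_nonneg.2 hθ) (sub_nonneg.2 hinv)]
  calc 2 ^ k * exp (4 * θ / 2 ^ k) ≤ exp (4 - 4 / 2 ^ k) * exp (4 * θ / 2 ^ k) := by
        gcongr; exact two_pow_le_exp_four_sub hk
    _ ≤ exp (4 * θ - 4 * θ / 2 ^ k) * exp (4 * θ / 2 ^ k) := by gcongr
    _ = exp (4 * θ) := by rw [← exp_add, sub_add_cancel]

lemma one_le_div_sub_one {r : ℝ} (hr : 1 < r) : 1 ≤ r / (r - 1) := by
  rw [le_div_iff₀ (by linarith)]; linarith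

theorem stmt_7_general (r : ℝ) (hr : 2 ≤ r) (θ : ℝ) (hθ : θ = r / (r - 1))
    (l w : ℕ) (hlw : l ≤ w) (hwl : w ≤ l + 5)
    (F0 f lam : ℝ) (hf : 0 < f) (hlam : 0 < lam)
    (h1 : 2 * r < F0 / 2 ^ l) (h2 : F0 / 2 ^ l ≤ 4 * r)
    (hflam : F0 / lam ≤ f) :
    1 / (f / 2 ^ w * Real.exp (-(θ * F0 / (r * 2 ^ w)))) ≤
      lam / (2 * r) * Real.exp (4 * θ) := by
  obtain ⟨k, rfl⟩ := Nat.exists_eq_add_of_le hlw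
  have hθ1 : 1 ≤ θ := hθ ▸ one_le_div_sub_one (by linarith)
  have h2l : (0 : ℝ) < 2 ^ l := by positivity
  have hscale : (2 : ℝ) ^ (l + k) / f ≤ lam / (2 * r) * 2 ^ k := by
    have hF0 : 2 * r * 2 ^ l < f * lam :=
      ((lt_div_iff₀ h2l).1 h1).trans_le ((div_le_iff₀ hlam).1 hflam)
    rw [div_le_iff₀ hf, pow_add, mul_right_comm]
    gcongr
    rw [div_mul_eq_mul_div, le_div_iff₀ (by positivity)]
    linarith
  have hexp : θ * F0 / (r * 2 ^ (l + k)) ≤ 4 * θ / 2 ^ k := by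
    calc θ * F0 / (r * 2 ^ (l + k)) = θ / (r * 2 ^ k) * (F0 / 2 ^ l) := by
          rw [pow_add]; field_simp
      _ ≤ θ / (r * 2 ^ k) * (4 * r) := by gcongr
      _ = 4 * θ / 2 ^ k := by field_simp
  calc 1 / (f / 2 ^ (l + k) * exp (-(θ * F0 / (r * 2 ^ (l + k)))))
      = 2 ^ (l + k) / f * exp (θ * F0 / (r * 2 ^ (l + k))) := by rw [exp_neg]; field_simp
    _ ≤ lam / (2 * r) * 2 ^ k * exp (4 * θ / 2 ^ k) := by gcongr
    _ = lam / (2 * r) * (2 ^ k * exp (4 * θ / 2 ^ k)) := mul_assoc _ _ _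
    _ ≤ lam / (2 * r) * exp (4 * θ) := by
        gcongr; exact two_pow_mul_exp_le_exp (by omega) hθ1

/-- With `θ = r/(r-1)`, `r ≥ 2`, `l ≤ w ≤ l + 5`, `2r < F₀/2^l ≤ 4r` and
`f ≥ F₀/λ`, we have `1/L(w) ≤ (λ/(2r))·exp(4θ)` where
`L(w) = (f/2^w)·exp(-θF₀/(r·2^w))`. -/
theorem stmt_7 (r : ℝ) (hr : 2 ≤ r) (θ : ℝ) (hθ : θ = r / (r - 1))
    (l w : ℕ) (hlw : l ≤ w) (hwl : w ≤ l + 5)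
    (F0 f lam : ℝ) (hF0 : 0 < F0) (hf : 0 < f) (hlam : 0 < lam)
    (h1 : 2 * r < F0 / 2 ^ l) (h2 : F0 / 2 ^ l ≤ 4 * r)
    (hflam : F0 / lam ≤ f) :
    1 / (f / 2 ^ w * Real.exp (-(θ * F0 / (r * 2 ^ w)))) ≤
      lam / (2 * r) * Real.exp (4 * θ) :=
  stmt_7_general r hr θ hθ l w hlw hwl F0 f lam hf hlam h1 h2 hflam
end

section
/- Let w' satisfy r/2 ≤ F_0/2^{w'} ≤ r, let θ = r/(r-1) with r ≥ 101, and 0 < ε < 0.1. Then (1+ε)·H(l-1) < (1-ε)·(r·f/(2F_0))·e^{-θ}, where H(l-1) = (f/2^{l-1})·θ·exp(-F_0/(r·2^{l-1})) and l satisfies 2r < F_0/2^l ≤ 4r. -/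
/-!
Put `t = F₀ / (r 2^(l-1))`. Then `H(l-1) = (r f / F₀) · θ · t e^(-t)`, and `2r < F₀/2^l` means
`t > 4`. Since `t e^(-t)` decreases for `t ≥ 1`, it is at most `4 e^(-4)`, while `θ ≤ 1.01` keeps
`e^(-θ)` above `10 e^(-4)`; this leaves a wide margin for the factors `1 ± ε`.
-/

open Real

lemma mul_exp_neg_le_mul_exp_neg {a t : ℝ} (ha : 1 ≤ a) (hat : a ≤ t) :
    t * exp (-t) ≤ a * exp (-a) := by
  have hgrowth : t ≤ a * exp (t - a) := by
    nlinarith [add_one_le_exp (t - a)]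
  calc t * exp (-t) ≤ a * exp (t - a) * exp (-t) := by gcongr
    _ = a * exp (-a) := by rw [mul_assoc, ← exp_add]; ring_nf

lemma ten_lt_exp : (10 : ℝ) < exp (299 / 100) := by
  have hsplit : exp (299 / 100) = exp 1 * exp 1 * exp (99 / 100) := by
    rw [← exp_add, ← exp_add]; norm_num
  have he := exp_one_gt_d9
  have h99 := add_one_le_exp (99 / 100 : ℝ)
  rw [hsplit]
  nlinarith [exp_pos 1]

lemma ten_mul_exp_neg_four_lt {θ : ℝ} (hθ : θ ≤ 101 / 100) : 10 * exp (-4) < exp (-θ) :=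
  calc 10 * exp (-4) < exp (299 / 100) * exp (-4) := by gcongr; exact ten_lt_exp
    _ = exp (-(101 / 100)) := by rw [← exp_add]; norm_num
    _ ≤ exp (-θ) := by gcongr

lemma one_add_mul_mul_exp_neg_lt {ε θ t : ℝ} (hε : ε < 0.1) (hθ0 : 0 < θ)
    (hθ : θ ≤ 101 / 100) (ht : 4 ≤ t) :
    (1 + ε) * θ * (t * exp (-t)) < (1 - ε) / 2 * exp (-θ) := by
  have hpeak := mul_exp_neg_le_mul_exp_neg (by norm_num) ht
  have hcoef : (1 + ε) * θ ≤ 1111 / 1000 := by nlinarith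
  have hpos : 0 ≤ t * exp (-t) := by positivity
  calc (1 + ε) * θ * (t * exp (-t)) ≤ 1111 / 1000 * (4 * exp (-4)) := by
        nlinarith [mul_le_mul_of_nonneg_right hcoef hpos]
    _ < 45 / 100 * exp (-θ) := by nlinarith [ten_mul_exp_neg_four_lt hθ, exp_pos (-4)]
    _ ≤ (1 - ε) / 2 * exp (-θ) := mul_le_mul_of_nonneg_right (by linarith) (exp_pos _).le

theorem stmt_10_general (r θ ε f F0 : ℝ) (hr : 101 ≤ r) (hθ : θ = r / (r - 1))
    (hε1 : ε < 0.1) (hf : 0 < f) (hF0 : 0 < F0)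
    (l : ℕ) (hl : 1 ≤ l)
    (h1 : 2 * r < F0 / 2 ^ l) :
    (1 + ε) * (f / 2 ^ (l - 1) * θ * Real.exp (-(F0 / (r * 2 ^ (l - 1))))) <
      (1 - ε) * (r * f / (2 * F0)) * Real.exp (-θ) := by
  have hr1 : (0 : ℝ) < r - 1 := by linarith
  have hθ0 : 0 < θ := hθ ▸ div_pos (by linarith) hr1
  have hθ1 : θ ≤ 101 / 100 := by rw [hθ, div_le_iff₀ hr1]; linarith
  set t := F0 / (r * 2 ^ (l - 1)) with ht
  have hpow : (2 : ℝ) ^ l = 2 ^ (l - 1) * 2 := by rw [← pow_succ, Nat.sub_add_cancel hl]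
  have ht4 : 4 ≤ t := by
    rw [hpow, lt_div_iff₀ (by positivity)] at h1
    rw [ht, le_div_iff₀ (by positivity)]
    nlinarith
  have hfactor : f / 2 ^ (l - 1) = t * (r * f / F0) := by
    rw [ht]; field_simp
  calc (1 + ε) * (f / 2 ^ (l - 1) * θ * exp (-t))
      = (1 + ε) * θ * (t * exp (-t)) * (r * f / F0) := by rw [hfactor]; ring
    _ < (1 - ε) / 2 * exp (-θ) * (r * f / F0) :=
        mul_lt_mul_of_pos_right (one_add_mul_mul_exp_neg_lt hε1 hθ0 hθ1 ht4) (by positivity)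
    _ = (1 - ε) * (r * f / (2 * F0)) * exp (-θ) := by field_simp

/-- Claim 3: with `r ≥ 101`, `θ = r/(r-1)`, `0 < ε < 0.1`, `2r < F₀/2^l ≤ 4r`
and `r/2 ≤ F₀/2^{w'} ≤ r`, we have
`(1+ε)·H(l-1) < (1-ε)·(r·f/(2F₀))·e^{-θ}`. -/
theorem stmt_10 (r θ ε f F0 : ℝ) (hr : 101 ≤ r) (hθ : θ = r / (r - 1))
    (hε0 : 0 < ε) (hε1 : ε < 0.1) (hf : 0 < f) (hF0 : 0 < F0)
    (l w' : ℕ) (hl : 1 ≤ l)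
    (h1 : 2 * r < F0 / 2 ^ l) (h2 : F0 / 2 ^ l ≤ 4 * r)
    (h3 : r / 2 ≤ F0 / 2 ^ w') (h4 : F0 / 2 ^ w' ≤ r) :
    (1 + ε) * (f / 2 ^ (l - 1) * θ * Real.exp (-(F0 / (r * 2 ^ (l - 1))))) <
      (1 - ε) * (r * f / (2 * F0)) * Real.exp (-θ) :=
  stmt_10_general r θ ε f F0 hr hθ hε1 hf hF0 l hl h1
end

section
/- Balls and bins with filtering: throw n balls, each independently discarded with probability 1-p (with 0 < p ≤ 1/(2r), r ≥ 2) and otherwise placed uniformly at random into one of u ≥ 8 bins. Fix bin j. Then the probability that bin j contains at least two balls and all other u-1 bins are empty is at most 1/u². -/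
/-!
The event forces some pair of balls into bin `j` while every ball lands in `j` or is discarded.
A union bound over the `C(n, 2)` pairs and independence bound its probability by
`C(n, 2) (p/u)² q^(n-2)` with `q = 1 - p + p/u ≤ 1 - 7p/8 ≤ exp (-7p/8)`, and
`C(n, 2) p² ≤ exp (7(n-2)p/8)` because the cubic Taylor polynomial of `exp` outgrows
the quadratic on the left once `p ≤ 1/4`.
-/

open MeasureTheory ProbabilityTheory Finset Real
open scoped ENNReal

theorem choose_two_mul_sq_le_exp (m : ℕ) {p : ℝ} (hp0 : 0 ≤ p) (hp : p ≤ 1 / 4) :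
    ((m + 2).choose 2 : ℝ) * p ^ 2 ≤ exp (7 / 8 * (m * p)) := by
  set z := 7 / 8 * (m * p) with hz
  have hz0 : 0 ≤ z := by positivity
  have htaylor : 1 + z + z ^ 2 / 2 + z ^ 3 / 6 ≤ exp z := by
    simpa [Finset.sum_range_succ, Nat.factorial] using sum_le_exp_of_nonneg hz0 4
  have hchoose : ((m + 2).choose 2 : ℝ) * p ^ 2 = (m * p + 2 * p) * (m * p + p) / 2 := by
    rw [Nat.cast_choose_two]; push_cast; ring
  rw [hchoose]
  nlinarith [mul_nonneg hp0 hz0, sq_nonneg (z - 1)]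

theorem choose_two_mul_sq_mul_pow_le_one (n : ℕ) {p q : ℝ} (hp0 : 0 ≤ p) (hp : p ≤ 1 / 4)
    (hq0 : 0 ≤ q) (hq : q ≤ 1 - 7 / 8 * p) :
    (n.choose 2 : ℝ) * p ^ 2 * q ^ (n - 2) ≤ 1 := by
  rcases lt_or_ge n 2 with hn | hn
  · simp [Nat.choose_eq_zero_of_lt hn]
  obtain ⟨m, rfl⟩ := Nat.exists_eq_add_of_le' hn
  have hqexp : q ^ m ≤ exp (-(7 / 8 * (m * p))) := by
    calc q ^ m ≤ exp (-(7 / 8 * p)) ^ m :=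
          pow_le_pow_left₀ hq0 (hq.trans (by linarith [add_one_le_exp (-(7 / 8 * p))])) m
      _ = exp (-(7 / 8 * (m * p))) := by rw [← exp_nat_mul]; ring_nf
  calc ((m + 2).choose 2 : ℝ) * p ^ 2 * q ^ (m + 2 - 2)
      ≤ exp (7 / 8 * (m * p)) * exp (-(7 / 8 * (m * p))) := by
        rw [Nat.add_sub_cancel]
        exact mul_le_mul (choose_two_mul_sq_le_exp m hp0 hp) hqexp (by positivity) (by positivity)
    _ = 1 := by rw [← exp_add, add_neg_cancel, exp_zero]

theorem choose_two_mul_div_sq_mul_pow_le (n : ℕ) {p u : ℝ} (hp0 : 0 ≤ p) (hp : p ≤ 1 / 4)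
    (hu : 8 ≤ u) :
    (n.choose 2 : ℝ) * (p / u) ^ 2 * (1 - p + p / u) ^ (n - 2) ≤ 1 / u ^ 2 := by
  have hpu : p / u ≤ p / 8 := div_le_div_of_nonneg_left hp0 (by norm_num) hu
  have hpu0 : 0 ≤ p / u := div_nonneg hp0 (by linarith)
  calc (n.choose 2 : ℝ) * (p / u) ^ 2 * (1 - p + p / u) ^ (n - 2)
      = n.choose 2 * p ^ 2 * (1 - p + p / u) ^ (n - 2) / u ^ 2 := by ring
    _ ≤ 1 / u ^ 2 := by
      gcongr
      exact choose_two_mul_sq_mul_pow_le_one n hp0 hp (by linarith) (by linarith)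

theorem Option.mem_insert_none_singleton_some_iff {α : Type*} {x : Option α} {j : α} :
    x ∈ ({none, some j} : Set (Option α)) ↔ ∀ b, b ≠ j → x ≠ some b := by
  rcases x with _ | x
  · simp
  · simpa using ⟨fun hx b hb => hx ▸ Ne.symm hb, fun h => by_contra fun hx => h x hx rfl⟩

section Independent

variable {Ω ι α : Type*} [MeasurableSpace Ω] [MeasurableSpace α] [Fintype ι] [DecidableEq ι]
  {μ : Measure Ω} {B : ι → Ω → α} {S T : Set α} {a b : ℝ≥0∞}

theorem ProbabilityTheory.iIndepFun.measure_iInter_preimage_ite_le (hind : iIndepFun B μ)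
    (hS : MeasurableSet S) (hT : MeasurableSet T)
    (haS : ∀ i, μ (B i ⁻¹' S) ≤ a) (hbT : ∀ i, μ (B i ⁻¹' T) ≤ b) (s : Finset ι) :
    μ (⋂ i, B i ⁻¹' (if i ∈ s then S else T)) ≤ a ^ #s * b ^ (Fintype.card ι - #s) := by
  have hprod := hind.measure_inter_preimage_eq_mul univ (sets := fun i => if i ∈ s then S else T)
    (fun i _ => by split_ifs <;> assumption)
  simp only [mem_univ, Set.iInter_true] at hprod
  rw [hprod]
  calc ∏ i, μ (B i ⁻¹' (if i ∈ s then S else T)) ≤ ∏ i : ι, if i ∈ s then a else b :=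
        prod_le_prod' fun i _ => by split_ifs <;> simp_all
    _ = a ^ #s * b ^ (Fintype.card ι - #s) := by
        rw [prod_ite, prod_const, prod_const, filter_mem_eq_inter, univ_inter, filter_not,
          filter_mem_eq_inter, univ_inter, card_sdiff_of_subset (subset_univ s), card_univ]

theorem ProbabilityTheory.iIndepFun.measure_card_le_filter_mem_and_forall_mem_le
    [DecidablePred (· ∈ S)] (hind : iIndepFun B μ)
    (hS : MeasurableSet S) (hT : MeasurableSet T)
    (haS : ∀ i, μ (B i ⁻¹' S) ≤ a) (hbT : ∀ i, μ (B i ⁻¹' T) ≤ b) (k : ℕ) :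
    μ {ω | k ≤ #{i | B i ω ∈ S} ∧ ∀ i, B i ω ∈ T} ≤
      (Fintype.card ι).choose k * a ^ k * b ^ (Fintype.card ι - k) := by
  have hcover : {ω | k ≤ #{i | B i ω ∈ S} ∧ ∀ i, B i ω ∈ T} ⊆
      ⋃ s ∈ powersetCard k univ, ⋂ i, B i ⁻¹' (if i ∈ s then S else T) := by
    rintro ω ⟨hk, hmemT⟩
    obtain ⟨s, hsS, rfl⟩ := exists_subset_card_eq hk
    refine Set.mem_biUnion (mem_powersetCard.2 ⟨subset_univ s, rfl⟩) (Set.mem_iInter.2 fun i => ?_)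
    by_cases hi : i ∈ s
    · simpa [hi] using (mem_filter.1 (hsS hi)).2
    · simpa [hi] using hmemT i
  calc μ _ ≤ ∑ s ∈ powersetCard k univ, μ (⋂ i, B i ⁻¹' (if i ∈ s then S else T)) :=
        (measure_mono hcover).trans (measure_biUnion_finset_le _ _)
    _ ≤ ∑ s ∈ powersetCard k (univ : Finset ι), a ^ k * b ^ (Fintype.card ι - k) :=
        sum_le_sum fun s hs => by
          simpa [(mem_powersetCard.1 hs).2] using hind.measure_iInter_preimage_ite_le hS hT haS hbT s
    _ = (Fintype.card ι).choose k * a ^ k * b ^ (Fintype.card ι - k) := by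
        rw [sum_const, card_powersetCard, card_univ, nsmul_eq_mul, mul_assoc]

end Independent

theorem stmt_13_general {Ω : Type*} [MeasurableSpace Ω] (μ : Measure Ω)
    (n u : ℕ) (hu : 8 ≤ u) (r p : ℝ) (hr : 2 ≤ r)
    (hp0 : 0 < p) (hp : p ≤ 1 / (2 * r))
    (B : Fin n → Ω → Option (Fin u))
    (hind : iIndepFun (m := fun _ => (⊤ : MeasurableSpace (Option (Fin u)))) B μ)
    (hnone : ∀ i, μ (B i ⁻¹' {none}) = ENNReal.ofReal (1 - p))
    (hsome : ∀ i b, μ (B i ⁻¹' {some b}) = ENNReal.ofReal (p / u))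
    (j : Fin u) :
    μ {ω | 2 ≤ (Finset.univ.filter fun i => B i ω = some j).card ∧
        ∀ b : Fin u, b ≠ j → ∀ i, B i ω ≠ some b} ≤
      ENNReal.ofReal (1 / u ^ 2) := by
  let _ : MeasurableSpace (Option (Fin u)) := ⊤
  have hp4 : p ≤ 1 / 4 := hp.trans (one_div_le_one_div_of_le (by norm_num) (by linarith))
  have hpu : 0 ≤ p / u := by positivity
  set q := 1 - p + p / u
  have hq0 : 0 ≤ q := by linarith
  have hnone_or_j (i : Fin n) : μ (B i ⁻¹' {none, some j}) ≤ ENNReal.ofReal q := by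
    rw [ENNReal.ofReal_add (by linarith) hpu, ← hnone i, ← hsome i j, Set.insert_eq,
      Set.preimage_union]
    exact measure_union_le _ _
  calc μ {ω | 2 ≤ (Finset.univ.filter fun i => B i ω = some j).card ∧
        ∀ b : Fin u, b ≠ j → ∀ i, B i ω ≠ some b}
      ≤ μ {ω | 2 ≤ #{i | B i ω ∈ ({some j} : Set _)} ∧ ∀ i, B i ω ∈ ({none, some j} : Set _)} :=
        measure_mono fun ω ⟨hk, hempty⟩ => ⟨by simpa using hk,
          fun i => Option.mem_insert_none_singleton_some_iff.2 fun b hb => hempty b hb i⟩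
    _ ≤ n.choose 2 * ENNReal.ofReal (p / u) ^ 2 * ENNReal.ofReal q ^ (n - 2) := by
        simpa only [Fintype.card_fin] using hind.measure_card_le_filter_mem_and_forall_mem_le
          MeasurableSpace.measurableSet_top MeasurableSpace.measurableSet_top
          (fun i => (hsome i j).le) hnone_or_j 2
    _ = ENNReal.ofReal (n.choose 2 * (p / u) ^ 2 * q ^ (n - 2)) := by
        rw [ENNReal.ofReal_mul (by positivity), ENNReal.ofReal_mul (by positivity),
          ENNReal.ofReal_pow hpu, ENNReal.ofReal_pow hq0, ENNReal.ofReal_natCast]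
    _ ≤ ENNReal.ofReal (1 / u ^ 2) :=
        ENNReal.ofReal_le_ofReal (choose_two_mul_div_sq_mul_pow_le n hp0.le hp4 (by exact_mod_cast hu))

/-- Balls and bins with filtering: `n` balls, each independently discarded with
probability `1-p` (where `0 < p ≤ 1/(2r)`, `r ≥ 2`) and otherwise placed
uniformly into one of `u ≥ 8` bins. For a fixed bin `j`, the probability that
bin `j` receives at least two balls while all other bins are empty is at most
`1/u²`. -/
theorem stmt_13 {Ω : Type*} [MeasurableSpace Ω] (μ : Measure Ω)
    [IsProbabilityMeasure μ] (n u : ℕ) (hu : 8 ≤ u) (r p : ℝ) (hr : 2 ≤ r)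
    (hp0 : 0 < p) (hp : p ≤ 1 / (2 * r))
    (B : Fin n → Ω → Option (Fin u))
    (hind : iIndepFun (m := fun _ => (⊤ : MeasurableSpace (Option (Fin u)))) B μ)
    (hnone : ∀ i, μ (B i ⁻¹' {none}) = ENNReal.ofReal (1 - p))
    (hsome : ∀ i b, μ (B i ⁻¹' {some b}) = ENNReal.ofReal (p / u))
    (j : Fin u) :
    μ {ω | 2 ≤ (Finset.univ.filter fun i => B i ω = some j).card ∧
        ∀ b : Fin u, b ≠ j → ∀ i, B i ω ≠ some b} ≤
      ENNReal.ofReal (1 / u ^ 2) :=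
  stmt_13_general μ n u hu r p hr hp0 hp B hind hnone hsome j
end

section
/- For n balls thrown as above (each kept with probability p and placed in a uniform bin among u bins), Σ_{k=2}^n C(n,k)(p/u)^k(1-p)^{n-k} ≤ (1/2)·(np/(u(1-p)))²·exp(-np(1 - 1/(u(1-p)))). -/
/-!
Factor out `(1 - p)^n`: the `k`-th term becomes `C(n,k) x^k` with `x = p / (u(1-p))`, which is at
most `y^k / k!` for `y = n x`. Since `k! ≥ 2 (k-2)!`, the tail `∑_{k≥2} y^k / k!` is at most
`y^2/2 · e^y`, and `(1 - p)^n ≤ e^{-np}`; the exponents combine to `-np(1 - 1/(u(1-p)))`.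
-/

open Finset Real
open scoped Nat

lemma choose_mul_pow_le_pow_div_factorial (n k : ℕ) {x : ℝ} (hx : 0 ≤ x) :
    (n.choose k : ℝ) * x ^ k ≤ (n * x) ^ k / k ! := by
  rw [mul_pow, mul_div_right_comm]
  gcongr
  exact_mod_cast Nat.choose_le_pow_div k n

lemma choose_mul_pow_mul_pow_sub_le {n k : ℕ} (hk : k ≤ n) {a q : ℝ} (ha : 0 ≤ a)
    (hq : 0 < q) :
    (n.choose k : ℝ) * a ^ k * q ^ (n - k) ≤ q ^ n * ((n * (a / q)) ^ k / k !) := by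
  have hsplit : a ^ k * q ^ (n - k) = (a / q) ^ k * q ^ n := by
    rw [div_pow, ← Nat.sub_add_cancel hk, pow_add, Nat.add_sub_cancel]
    field_simp
  calc (n.choose k : ℝ) * a ^ k * q ^ (n - k)
        = q ^ n * ((n.choose k : ℝ) * (a / q) ^ k) := by
        rw [mul_assoc, hsplit]; ring
    _ ≤ q ^ n * ((n * (a / q)) ^ k / k !) := by
        gcongr
        exact choose_mul_pow_le_pow_div_factorial n k (by positivity)

lemma sum_Icc_two_pow_div_factorial_le {y : ℝ} (hy : 0 ≤ y) (n : ℕ) :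
    ∑ k ∈ Icc 2 n, y ^ k / k ! ≤ y ^ 2 / 2 * exp y := by
  rw [← Ico_add_one_right_eq_Icc, sum_Ico_eq_sum_range, mul_comm]
  calc ∑ j ∈ range (n + 1 - 2), y ^ (2 + j) / (2 + j)!
      ≤ ∑ j ∈ range (n + 1 - 2), y ^ j / j ! * (y ^ 2 / 2) := by
        refine sum_le_sum fun j _ => ?_
        rw [add_comm 2 j, pow_add, div_mul_div_comm]
        gcongr
        exact_mod_cast Nat.le_of_dvd (Nat.factorial_pos _)
          (Nat.factorial_mul_factorial_dvd_factorial_add j 2)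
    _ ≤ exp y * (y ^ 2 / 2) := by
        rw [← sum_mul]
        gcongr
        exact sum_le_exp_of_nonneg hy _

lemma one_sub_pow_le_exp_neg_mul {p : ℝ} (hp : p ≤ 1) (n : ℕ) :
    (1 - p) ^ n ≤ exp (-(n * p)) :=
  calc (1 - p) ^ n ≤ exp (-p) ^ n := pow_le_pow_left₀ (by linarith) (one_sub_le_exp_neg p) n
    _ = exp (-(n * p)) := by rw [← exp_nat_mul, mul_neg]

/-- Core inequality of the false-positive lemma: for `0 < p < 1`, `u ≥ 1`,
`∑_{k=2}^n C(n,k)(p/u)^k(1-p)^{n-k} ≤ (1/2)(np/(u(1-p)))²·exp(-np(1 - 1/(u(1-p))))`. -/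
theorem stmt_14 (n : ℕ) (p u : ℝ) (hp0 : 0 < p) (hp1 : p < 1) (hu : 1 ≤ u) :
    ∑ k ∈ Finset.Icc 2 n, (n.choose k : ℝ) * (p / u) ^ k * (1 - p) ^ (n - k) ≤
      1 / 2 * ((n : ℝ) * p / (u * (1 - p))) ^ 2 *
        Real.exp (-((n : ℝ) * p * (1 - 1 / (u * (1 - p))))) := by
  have hq : 0 < 1 - p := by linarith
  have hu0 : 0 < u := by linarith
  set y : ℝ := n * p / (u * (1 - p))
  have hy : n * (p / u / (1 - p)) = y := by rw [div_div, ← mul_div_assoc]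
  calc ∑ k ∈ Icc 2 n, (n.choose k : ℝ) * (p / u) ^ k * (1 - p) ^ (n - k)
      ≤ (1 - p) ^ n * ∑ k ∈ Icc 2 n, y ^ k / k ! := by
        rw [mul_sum, ← hy]
        exact sum_le_sum fun k hk =>
          choose_mul_pow_mul_pow_sub_le (mem_Icc.mp hk).2 (by positivity) hq
    _ ≤ exp (-(n * p)) * (y ^ 2 / 2 * exp y) := by
        gcongr
        · exact one_sub_pow_le_exp_neg_mul hp1.le n
        · exact sum_Icc_two_pow_div_factorial_le (by positivity) n
    _ = 1 / 2 * y ^ 2 * exp (-(n * p * (1 - 1 / (u * (1 - p))))) := by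
        rw [mul_left_comm, ← exp_add]
        congr 2
        field_simp
        ring
end

section
/- With ρ as above and F/2^w ≤ 4r, r ≥ 2: (1 - 1/r)·e^{-4/(r-1)} ≤ ρ ≤ e^{4/(r-1)}. In particular, if r ≥ 1 + 8/ε² (so that 4/(r-1) ≤ ε²/2) and r ≥ 2/ε², then 1 - ε² ≤ ρ ≤ 1 + ε² for 0 < ε < 1. -/
/-!
With `A = 1 - 1/r` and `B = 1 - 1/(r s)`, `s = 2^w`, the logarithm of `ρ` splits as
`(log A - log B) + F (log B - (log A)/s)`. The first summand lies in `[log A, 0]`. By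
`1 - 1/x ≤ log x ≤ x - 1`, the bracket of the second lies between `-1/(rs(rs-1))` and
`1/(rs(r-1))`, so `F ≤ 4rs` puts the second summand in `[-4/(r-1), 4/(r-1)]`. The `ε`-bounds
then follow from `e^{-t} ≥ 1 - t` and `e^t ≤ 1/(1-t) ≤ 1 + 2t` for `t ≤ 1/2`.
-/

open Real

lemma one_sub_one_div_pos {x : ℝ} (hx : 1 < x) : 0 < 1 - 1 / x := by
  rw [sub_pos, div_lt_one (by linarith)]
  exact hx

lemma neg_one_div_sub_one_le_log_one_sub_one_div {x : ℝ} (hx : 1 < x) :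
    -(1 / (x - 1)) ≤ log (1 - 1 / x) := by
  have hinv : 1 - (1 - 1 / x)⁻¹ = -(1 / (x - 1)) := by
    have : x - 1 ≠ 0 := by linarith
    field_simp
    ring
  exact hinv ▸ one_sub_inv_le_log_of_pos (one_sub_one_div_pos hx)

lemma log_one_sub_one_div_le {x : ℝ} (hx : 1 < x) : log (1 - 1 / x) ≤ -(1 / x) := by
  linarith [log_le_sub_one_of_pos (one_sub_one_div_pos hx)]

lemma exp_le_one_add_two_mul {t : ℝ} (ht0 : 0 ≤ t) (ht1 : t ≤ 1 / 2) : exp t ≤ 1 + 2 * t :=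
  calc exp t ≤ 1 / (1 - t) := exp_bound_div_one_sub_of_interval ht0 (by linarith)
    _ ≤ 1 + 2 * t := by rw [div_le_iff₀ (by linarith)]; nlinarith

lemma one_sub_sub_le_mul_exp_neg {a t : ℝ} (ha0 : 0 ≤ a) (ha1 : a ≤ 1) (ht : 0 ≤ t) :
    1 - a - t ≤ (1 - a) * exp (-t) :=
  calc 1 - a - t ≤ (1 - a) * (1 - t) := by nlinarith [mul_nonneg ha0 ht]
    _ ≤ (1 - a) * exp (-t) := mul_le_mul_of_nonneg_left (one_sub_le_exp_neg t) (by linarith)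

/-- The factor `ρ`, with `s` in place of `2 ^ w`. -/
noncomputable def correctionFactor (r s F : ℝ) : ℝ :=
  (1 - 1 / r) ^ (1 - F / s) * (1 - 1 / (r * s)) ^ (F - 1)

namespace correctionFactor

variable {r s F : ℝ}

lemma eq_exp (hr : 1 < r) (hs : 1 ≤ s) :
    correctionFactor r s F = exp ((log (1 - 1 / r) - log (1 - 1 / (r * s))) +
      F * (log (1 - 1 / (r * s)) - log (1 - 1 / r) / s)) := by
  rw [correctionFactor, rpow_def_of_pos (one_sub_one_div_pos hr),
    rpow_def_of_pos (one_sub_one_div_pos (by nlinarith : 1 < r * s)), ← exp_add]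
  congr 1
  have : s ≠ 0 := by linarith
  field_simp
  ring

lemma le_exp (hr : 1 < r) (hs : 1 ≤ s) (hF : 0 ≤ F) (hFrs : F ≤ 4 * r * s) :
    correctionFactor r s F ≤ exp (4 / (r - 1)) := by
  have hrs : 1 < r * s := by nlinarith
  have hAB : log (1 - 1 / r) - log (1 - 1 / (r * s)) ≤ 0 := by
    have : 1 / (r * s) ≤ 1 / r := one_div_le_one_div_of_le (by linarith) (by nlinarith)
    linarith [log_le_log (one_sub_one_div_pos hr) (by linarith : 1 - 1 / r ≤ 1 - 1 / (r * s))]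
  have hbracket : log (1 - 1 / (r * s)) - log (1 - 1 / r) / s ≤ 1 / (r * s * (r - 1)) :=
    calc _ ≤ -(1 / (r * s)) - -(1 / (r - 1)) / s := by
            have : -(1 / (r - 1)) / s ≤ log (1 - 1 / r) / s := by
              gcongr
              exact neg_one_div_sub_one_le_log_one_sub_one_div hr
            linarith [log_one_sub_one_div_le hrs]
      _ = 1 / (r * s * (r - 1)) := by
            have : r - 1 ≠ 0 := by linarith
            field_simp
            ring
  have hFterm : F * (log (1 - 1 / (r * s)) - log (1 - 1 / r) / s) ≤ 4 / (r - 1) :=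
    calc _ ≤ F * (1 / (r * s * (r - 1))) := mul_le_mul_of_nonneg_left hbracket hF
      _ ≤ 4 * r * s * (1 / (r * s * (r - 1))) := by gcongr
      _ = 4 / (r - 1) := by field_simp
  rw [eq_exp hr hs, exp_le_exp]
  linarith

lemma mul_exp_le (hr : 1 < r) (hs : 1 ≤ s) (hF : 0 ≤ F) (hFrs : F ≤ 4 * r * s) :
    (1 - 1 / r) * exp (-(4 / (r - 1))) ≤ correctionFactor r s F := by
  have hrs : 1 < r * s := by nlinarith
  have hB : log (1 - 1 / (r * s)) ≤ 0 := by
    have : 0 < 1 / (r * s) := by positivity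
    linarith [log_one_sub_one_div_le hrs]
  have hbracket : -(1 / (r * s * (r * s - 1))) ≤
      log (1 - 1 / (r * s)) - log (1 - 1 / r) / s :=
    calc _ = -(1 / (r * s - 1)) - -(1 / r) / s := by
            have : r * s - 1 ≠ 0 := by linarith
            field_simp
            ring
      _ ≤ _ := by
            have : log (1 - 1 / r) / s ≤ -(1 / r) / s := by
              gcongr
              exact log_one_sub_one_div_le hr
            linarith [neg_one_div_sub_one_le_log_one_sub_one_div hrs]
  have hFterm : -(4 / (r - 1)) ≤ F * (log (1 - 1 / (r * s)) - log (1 - 1 / r) / s) :=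
    calc -(4 / (r - 1)) ≤ -(4 / (r * s - 1)) := by
            gcongr
            nlinarith
      _ = 4 * r * s * -(1 / (r * s * (r * s - 1))) := by
            have : r * s - 1 ≠ 0 := by linarith
            field_simp
      _ ≤ F * -(1 / (r * s * (r * s - 1))) := by
            have : 0 < r * s - 1 := by linarith
            exact mul_le_mul_of_nonpos_right hFrs (by simp only [neg_nonpos]; positivity)
      _ ≤ _ := mul_le_mul_of_nonneg_left hbracket hF
  rw [eq_exp hr hs]
  calc (1 - 1 / r) * exp (-(4 / (r - 1))) = exp (log (1 - 1 / r) + -(4 / (r - 1))) := by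
        rw [exp_add, exp_log (one_sub_one_div_pos hr)]
    _ ≤ _ := exp_le_exp.2 (by linarith)

end correctionFactor

theorem stmt_19_general (r F ε : ℝ) (w : ℕ) (hr : 2 ≤ r) (hF : 0 < F)
    (hF4r : F / 2 ^ w ≤ 4 * r) (hε0 : 0 < ε) (hε1 : ε < 1)
    (hr1 : 1 + 8 / ε ^ 2 ≤ r) (hr2 : 2 / ε ^ 2 ≤ r) :
    (1 - 1 / r) * Real.exp (-(4 / (r - 1))) ≤
        (1 - 1 / r) ^ (1 - F / 2 ^ w) * (1 - 1 / (r * 2 ^ w)) ^ (F - 1) ∧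
      (1 - 1 / r) ^ (1 - F / 2 ^ w) * (1 - 1 / (r * 2 ^ w)) ^ (F - 1) ≤
        Real.exp (4 / (r - 1)) ∧
      1 - ε ^ 2 ≤
        (1 - 1 / r) ^ (1 - F / 2 ^ w) * (1 - 1 / (r * 2 ^ w)) ^ (F - 1) ∧
      (1 - 1 / r) ^ (1 - F / 2 ^ w) * (1 - 1 / (r * 2 ^ w)) ^ (F - 1) ≤
        1 + ε ^ 2 := by
  have hr_one : 1 < r := by linarith
  have hs : (1 : ℝ) ≤ 2 ^ w := one_le_pow₀ (by norm_num)
  have hFrs : F ≤ 4 * r * 2 ^ w := by rwa [div_le_iff₀ (by positivity)] at hF4r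
  have ht : 2 * (4 / (r - 1)) ≤ ε ^ 2 :=
    calc 2 * (4 / (r - 1)) = 8 / (r - 1) := by ring
      _ ≤ ε ^ 2 := (div_le_comm₀ (by positivity) (by linarith)).1 (by linarith)
  have hinv : 2 * (1 / r) ≤ ε ^ 2 :=
    calc 2 * (1 / r) = 2 / r := by ring
      _ ≤ ε ^ 2 := (div_le_comm₀ (by positivity) (by linarith)).1 hr2
  have hlo := correctionFactor.mul_exp_le hr_one hs hF.le hFrs
  have hhi := correctionFactor.le_exp hr_one hs hF.le hFrs
  refine ⟨hlo, hhi, ?_, ?_⟩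
  · calc 1 - ε ^ 2 ≤ 1 - 1 / r - 4 / (r - 1) := by linarith
      _ ≤ _ := one_sub_sub_le_mul_exp_neg (by positivity)
          ((div_le_one (by positivity)).2 hr_one.le) (by positivity)
      _ ≤ _ := hlo
  · calc _ ≤ exp (4 / (r - 1)) := hhi
      _ ≤ 1 + 2 * (4 / (r - 1)) := exp_le_one_add_two_mul (by positivity) (by nlinarith)
      _ ≤ 1 + ε ^ 2 := by linarith

/-- Bounds on the correction factor
`ρ = (1-1/r)^{1-F/2^w}·(1-1/(r·2^w))^{F-1}` when `F > 0`, `F/2^w ≤ 4r`, `r ≥ 2`: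
`(1-1/r)·e^{-4/(r-1)} ≤ ρ ≤ e^{4/(r-1)}`; and if moreover `r ≥ 1 + 8/ε²` and
`r ≥ 2/ε²` for `0 < ε < 1`, then `1 - ε² ≤ ρ ≤ 1 + ε²`. -/
theorem stmt_19 (r F ε : ℝ) (w : ℕ) (hw : 1 ≤ w) (hr : 2 ≤ r) (hF : 0 < F)
    (hF4r : F / 2 ^ w ≤ 4 * r) (hε0 : 0 < ε) (hε1 : ε < 1)
    (hr1 : 1 + 8 / ε ^ 2 ≤ r) (hr2 : 2 / ε ^ 2 ≤ r) :
    (1 - 1 / r) * Real.exp (-(4 / (r - 1))) ≤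
        (1 - 1 / r) ^ (1 - F / 2 ^ w) * (1 - 1 / (r * 2 ^ w)) ^ (F - 1) ∧
      (1 - 1 / r) ^ (1 - F / 2 ^ w) * (1 - 1 / (r * 2 ^ w)) ^ (F - 1) ≤
        Real.exp (4 / (r - 1)) ∧
      1 - ε ^ 2 ≤
        (1 - 1 / r) ^ (1 - F / 2 ^ w) * (1 - 1 / (r * 2 ^ w)) ^ (F - 1) ∧
      (1 - 1 / r) ^ (1 - F / 2 ^ w) * (1 - 1 / (r * 2 ^ w)) ^ (F - 1) ≤
        1 + ε ^ 2 :=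
  stmt_19_general r F ε w hr hF hF4r hε0 hε1 hr1 hr2
end
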